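/- Let F be the free group on generators x_1, …, x_n, let J be a finite index set, and for each j ∈ J let r_j = w_j x_{s(j)} w_j^{-1} x_{t(j)}^{-1} with w_j ∈ F and s, t : J → {1,…,n}. Let G be the quotient of F by the normal closure of {r_j : j ∈ J} (a group with Wirtinger presentation). If the graph on vertex set {1,…,n} with an edge {s(j), t(j)} for each j ∈ J is connected, then the abelianization of G is infinite cyclic (isomorphic to ℤ). -/

import Mathlib

/-!
Every Wirtinger relator says that two generators are conjugate, so in the abelianization
the relator identifies them; connectivity of the graph makes all generators equal to one
class `g`, which therefore generates. The homomorphism sending every generator to `1 : ℤ`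
kills all relators, so it is defined on the abelianization and sends `g` to `1`: it is
inverse to `n ↦ g ^ n`.
-/

lemma map_conj_mul_inv {G A : Type*} [Group G] [CommGroup A] (f : G →* A) (w x y : G) :
    f (w * x * w⁻¹ * y⁻¹) = f x / f y := by
  rw [map_mul, map_mul, map_mul, map_inv, map_inv, mul_inv_cancel_comm, div_eq_mul_inv]

section Wirtinger

variable {α J : Type*} (w : J → FreeGroup α) (s t : J → α)

def wirtingerRelators : Set (FreeGroup α) :=
  Set.range fun j => w j * FreeGroup.of (s j) * (w j)⁻¹ * (FreeGroup.of (t j))⁻¹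

def wirtingerAdj (a b : α) : Prop :=
  ∃ j, (s j = a ∧ t j = b) ∨ (s j = b ∧ t j = a)

def wirtingerDegree : PresentedGroup (wirtingerRelators w s t) →* Multiplicative ℤ :=
  PresentedGroup.toGroup (f := fun _ => Multiplicative.ofAdd 1) <| by
    rintro _ ⟨j, rfl⟩
    rw [map_conj_mul_inv, FreeGroup.lift_apply_of, FreeGroup.lift_apply_of, div_self']

@[simp]
lemma wirtingerDegree_of (a : α) :
    wirtingerDegree w s t (PresentedGroup.of a) = Multiplicative.ofAdd 1 :=
  PresentedGroup.toGroup.of _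

lemma abelianization_of_source_eq_target (j : J) :
    Abelianization.of (PresentedGroup.of (rels := wirtingerRelators w s t) (s j)) =
      Abelianization.of (PresentedGroup.of (t j)) := by
  have hrel := congrArg Abelianization.of
    (PresentedGroup.one_of_mem (rels := wirtingerRelators w s t) ⟨j, rfl⟩)
  rw [map_one, ← MonoidHom.comp_apply, map_conj_mul_inv] at hrel
  exact div_eq_one.mp hrel

lemma abelianization_of_eq_of_reflTransGen {a b : α}
    (hab : Relation.ReflTransGen (wirtingerAdj s t) a b) :
    Abelianization.of (PresentedGroup.of (rels := wirtingerRelators w s t) a) =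
      Abelianization.of (PresentedGroup.of b) := by
  induction hab with
  | refl => rfl
  | tail _ hbc ih =>
    obtain ⟨j, ⟨rfl, rfl⟩ | ⟨rfl, rfl⟩⟩ := hbc
    · exact ih.trans (abelianization_of_source_eq_target w s t j)
    · exact ih.trans (abelianization_of_source_eq_target w s t j).symm

def abelianizationWirtingerMulEquivInt (a₀ : α)
    (hconn : ∀ a b, Relation.ReflTransGen (wirtingerAdj s t) a b) :
    Abelianization (PresentedGroup (wirtingerRelators w s t)) ≃* Multiplicative ℤ :=
  let g := Abelianization.of (PresentedGroup.of (rels := wirtingerRelators w s t) a₀)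
  MonoidHom.toMulEquiv (Abelianization.lift (wirtingerDegree w s t)) (zpowersHom _ g)
    (Abelianization.hom_ext _ _ <| PresentedGroup.ext fun a => by
      simp [g, abelianization_of_eq_of_reflTransGen w s t (hconn a₀ a)])
    (MonoidHom.ext_mint <| by simp [g])

end Wirtinger

theorem wirtinger_abelianization_general (n : ℕ) (hn : 1 ≤ n) (J : Type)
    (w : J → FreeGroup (Fin n)) (s t : J → Fin n)
    (hconn : ∀ a b : Fin n, Relation.ReflTransGen
      (fun a b : Fin n => ∃ j : J, (s j = a ∧ t j = b) ∨ (s j = b ∧ t j = a)) a b) :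
    Nonempty
      (Abelianization (PresentedGroup
          (Set.range fun j : J =>
            w j * FreeGroup.of (s j) * (w j)⁻¹ * (FreeGroup.of (t j))⁻¹)) ≃*
        Multiplicative ℤ) :=
  ⟨abelianizationWirtingerMulEquivInt w s t ⟨0, hn⟩ hconn⟩

/-- If a group has a Wirtinger presentation (every relator of the form
`w x_s w⁻¹ x_t⁻¹`) whose associated graph on the generators is connected,
then its abelianization is infinite cyclic. -/
theorem wirtinger_abelianization (n : ℕ) (hn : 1 ≤ n) (J : Type) [Fintype J]
    (w : J → FreeGroup (Fin n)) (s t : J → Fin n)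
    (hconn : ∀ a b : Fin n, Relation.ReflTransGen
      (fun a b : Fin n => ∃ j : J, (s j = a ∧ t j = b) ∨ (s j = b ∧ t j = a)) a b) :
    Nonempty
      (Abelianization (PresentedGroup
          (Set.range fun j : J =>
            w j * FreeGroup.of (s j) * (w j)⁻¹ * (FreeGroup.of (t j))⁻¹)) ≃*
        Multiplicative ℤ) :=
  wirtinger_abelianization_general n hn J w s t hconn
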